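/- Let s > 0 with ζ(1/2 + is) = 0, and let L = 2πn/s for a positive integer n, μ = exp(L). Then for every f ∈ S₀^ev, the function χ(u) = u^{is} is well-defined on C = ℝ₊*/μ^ℤ and ∫_C χ(u)·Σ_μE(f)(u) d*u = 0; in particular the subspace Σ_μE(S₀^ev) is not dense in L²(C), i.e. C is a ζ-cycle. -/

import Mathlib

/-!
Write `Σ_μ E(f)(u) = ∑_k (μ^k u)^{1/2} θ(μ^k u)` with `θ(x) = ∑_{n ≥ 1} f(n x)`. Because `u^{is}` is
`μ`-periodic, the integral of `u^{is} Σ_μ E(f)(u)` over the fundamental domain `(1, μ]` unfolds to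
the Mellin transform `∫_0^∞ x^{w-1} θ(x) dx` at `w = 1/2 + is`. For `re w > 1` this transform is
`ζ(w) ∫_0^∞ x^{w-1} f(x) dx`. Since `∫_0^∞ f = 0`, the Riemann sums `x θ(x)` of `∫_0^∞ f` keep `θ`
bounded, so both sides stay holomorphic for `re w > 0` and the identity continues to `w = 1/2 + is`,
where it vanishes. Then `u ↦ u^{-is}` is a nonzero vector of `L²(C)` orthogonal to `Σ_μ E(S₀^ev)`.
-/

open MeasureTheory Set Complex

/-- The space `S₀^ev` of even real Schwartz functions with `f(0) = 0` and `∫ f = 0`. -/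
def S0ev : Set (SchwartzMap ℝ ℝ) :=
  {f | (∀ x, f (-x) = f x) ∧ f 0 = 0 ∧ (∫ x : ℝ, f x) = 0}

/-- `Σ_μ E(f)(u) = ∑_{k∈ℤ} (μ^k u)^{1/2} ∑_{n≥1} f(n μ^k u)`. -/
noncomputable def SigmaE (μ : ℝ) (f : SchwartzMap ℝ ℝ) (u : ℝ) : ℝ :=
  ∑' k : ℤ, Real.sqrt (μ ^ k * u) * ∑' n : ℕ, f (((n : ℝ) + 1) * (μ ^ k * u))

/-- The measure `d*u = du/u` on the fundamental domain `(1, μ]` of `ℝ₊*/μ^ℤ`;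
`L²` of this measure is `L²(C)` for the circle `C = ℝ₊*/μ^ℤ` of length `log μ`. -/
noncomputable def mulHaarOn (μ : ℝ) : Measure ℝ :=
  (volume.restrict (Set.Ioc (1:ℝ) μ)).withDensity fun u => ENNReal.ofReal u⁻¹

/-- The circle `C = ℝ₊*/μ^ℤ` is a ζ-cycle when `Σ_μ E(S₀^ev)` is not dense in `L²(C)`,
equivalently when some nonzero `g ∈ L²(C)` is orthogonal to all `Σ_μ E(f)`, `f ∈ S₀^ev`. -/
noncomputable def IsZetaCycle (μ : ℝ) : Prop :=
  ∃ g : Lp ℂ 2 (mulHaarOn μ), g ≠ 0 ∧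
    ∀ f ∈ S0ev, (∫ u, (starRingEnd ℂ) (g u) * (SigmaE μ f u : ℂ) ∂(mulHaarOn μ)) = 0

open Filter Topology Asymptotics

/-- The paper's `E(f)(u)` is `u^{1/2} · latticeSum f u`. -/
noncomputable def latticeSum (f : SchwartzMap ℝ ℝ) (x : ℝ) : ℝ :=
  ∑' n : ℕ, f (((n : ℝ) + 1) * x)

lemma summable_one_div_nat_add_one_sq : Summable fun n : ℕ => 1 / ((n : ℝ) + 1) ^ 2 := by
  simpa using (summable_nat_add_iff 1).2 (Real.summable_one_div_nat_pow.2 one_lt_two)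

namespace SchwartzMap

variable (f : SchwartzMap ℝ ℝ)

lemma abs_apply_nat_succ_mul_le (k : ℕ) {x : ℝ} (hx : x ≠ 0) (n : ℕ) :
    |f (((n : ℝ) + 1) * x)| ≤
      SchwartzMap.seminorm ℝ (k + 2) 0 f / |x| ^ (k + 2) * (1 / ((n : ℝ) + 1) ^ 2) := by
  have hx' : 0 < |x| := abs_pos.2 hx
  have hpow : ((n : ℝ) + 1) ^ 2 * |x| ^ (k + 2) ≤ |((n : ℝ) + 1) * x| ^ (k + 2) := by
    rw [abs_mul, abs_of_pos (show (0 : ℝ) < n + 1 by positivity), mul_pow]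
    gcongr
    · simp
    · omega
  rw [div_mul_div_comm, mul_one, mul_comm (|x| ^ _), le_div_iff₀ (by positivity)]
  calc |f (((n : ℝ) + 1) * x)| * (((n : ℝ) + 1) ^ 2 * |x| ^ (k + 2))
      ≤ |((n : ℝ) + 1) * x| ^ (k + 2) * |f (((n : ℝ) + 1) * x)| := by
        rw [mul_comm]; gcongr
    _ ≤ _ := f.norm_pow_mul_le_seminorm ℝ _ _

lemma summable_nat_succ_mul (hf0 : f 0 = 0) (x : ℝ) :
    Summable fun n : ℕ => f (((n : ℝ) + 1) * x) := by
  rcases eq_or_ne x 0 with rfl | hx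
  · simp [hf0]
  · exact .of_norm_bounded (summable_one_div_nat_add_one_sq.mul_left _)
      (f.abs_apply_nat_succ_mul_le 0 hx)

lemma pow_mul_abs_latticeSum_le (hf0 : f 0 = 0) (k : ℕ) :
    ∃ C, ∀ x : ℝ, 1 ≤ x → x ^ k * |latticeSum f x| ≤ C := by
  set K := ∑' n : ℕ, 1 / ((n : ℝ) + 1) ^ 2
  refine ⟨SchwartzMap.seminorm ℝ (k + 2) 0 f * K, fun x hx => ?_⟩
  have hx0 : 0 < x := by linarith
  have hbound := f.abs_apply_nat_succ_mul_le k hx0.ne'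
  rw [abs_of_pos hx0] at hbound
  calc x ^ k * |latticeSum f x|
      ≤ x ^ k * ∑' n : ℕ, SchwartzMap.seminorm ℝ (k + 2) 0 f / x ^ (k + 2) *
          (1 / ((n : ℝ) + 1) ^ 2) := by
        gcongr
        exact (norm_tsum_le_tsum_norm (f.summable_nat_succ_mul hf0 x).norm).trans
          ((f.summable_nat_succ_mul hf0 x).norm.tsum_le_tsum hbound
            (summable_one_div_nat_add_one_sq.mul_left _))
    _ = SchwartzMap.seminorm ℝ (k + 2) 0 f * K / x ^ 2 := by
        rw [tsum_mul_left]; field_simp; ring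
    _ ≤ SchwartzMap.seminorm ℝ (k + 2) 0 f * K :=
        div_le_self (by positivity) (one_le_pow₀ hx)

end SchwartzMap

section RiemannSum

variable {g : ℝ → ℝ} (hg : Differentiable ℝ g) (hg' : Continuous (deriv g))
include hg hg'

lemma abs_mul_sub_intervalIntegral_le {a b : ℝ} (hab : a ≤ b) :
    |(b - a) * g b - ∫ t in a..b, g t| ≤ (b - a) * ∫ t in a..b, |deriv g t| := by
  have hvar : ∀ t ∈ Icc a b, |g b - g t| ≤ ∫ y in a..b, |deriv g y| := by
    intro t ht
    rw [← intervalIntegral.integral_deriv_eq_sub (fun y _ => hg y) (hg'.intervalIntegrable _ _)]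
    calc |∫ y in t..b, deriv g y| ≤ ∫ y in t..b, |deriv g y| :=
          intervalIntegral.abs_integral_le_integral_abs ht.2
      _ ≤ ∫ y in a..b, |deriv g y| :=
          intervalIntegral.integral_mono_interval ht.1 ht.2 le_rfl
            (ae_of_all _ fun y => abs_nonneg _) (hg'.abs.intervalIntegrable _ _)
  have hconst : (b - a) * g b - ∫ t in a..b, g t = ∫ t in a..b, (g b - g t) := by
    rw [intervalIntegral.integral_sub intervalIntegrable_const
      (hg.continuous.intervalIntegrable _ _), intervalIntegral.integral_const, smul_eq_mul]
  rw [hconst]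
  calc |∫ t in a..b, (g b - g t)| ≤ ∫ t in a..b, |g b - g t| :=
        intervalIntegral.abs_integral_le_integral_abs hab
    _ ≤ ∫ _ in a..b, ∫ y in a..b, |deriv g y| :=
        intervalIntegral.integral_mono_on hab
          ((continuous_const.sub hg.continuous).abs.intervalIntegrable _ _)
          intervalIntegrable_const hvar
    _ = (b - a) * ∫ t in a..b, |deriv g t| := by
        rw [intervalIntegral.integral_const, smul_eq_mul]

lemma abs_mul_sum_sub_intervalIntegral_le {x : ℝ} (hx : 0 ≤ x) (N : ℕ) :
    |x * ∑ n ∈ Finset.range N, g (((n : ℝ) + 1) * x) - ∫ t in 0..N * x, g t| ≤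
      x * ∫ t in 0..N * x, |deriv g t| := by
  have hsplit : ∀ h : ℝ → ℝ, Continuous h →
      ∫ t in 0..N * x, h t = ∑ n ∈ Finset.range N, ∫ t in n * x..((n : ℝ) + 1) * x, h t := by
    intro h hh
    have := intervalIntegral.sum_integral_adjacent_intervals (a := fun n : ℕ => (n : ℝ) * x)
      (n := N) (μ := MeasureTheory.volume) (fun _ _ => hh.intervalIntegrable _ _)
    simpa using this.symm
  rw [hsplit g hg.continuous, hsplit _ hg'.abs, Finset.mul_sum, Finset.mul_sum,
    ← Finset.sum_sub_distrib]
  refine (Finset.abs_sum_le_sum_abs _ _).trans (Finset.sum_le_sum fun n _ => ?_)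
  have := abs_mul_sub_intervalIntegral_le hg hg'
    (show (n : ℝ) * x ≤ ((n : ℝ) + 1) * x by nlinarith)
  rwa [show ((n : ℝ) + 1) * x - n * x = x by ring] at this

end RiemannSum

namespace SchwartzMap

variable (f : SchwartzMap ℝ ℝ)

lemma continuous_deriv : Continuous (deriv f) :=
  (f.smooth ⊤).continuous_deriv (by simp)

lemma integrable_deriv : Integrable (deriv f) := by
  have : ⇑(SchwartzMap.derivCLM ℝ ℝ f) = deriv f := funext (SchwartzMap.derivCLM_apply ℝ f)
  exact this ▸ (SchwartzMap.derivCLM ℝ ℝ f).integrable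

lemma abs_latticeSum_le (hf0 : f 0 = 0) (hf : ∫ t in Ioi 0, f t = 0) {x : ℝ} (hx : 0 < x) :
    |latticeSum f x| ≤ ∫ t in Ioi 0, |deriv f t| := by
  have hN : Tendsto (fun N : ℕ => (N : ℝ) * x) atTop atTop :=
    tendsto_natCast_atTop_atTop.atTop_mul_const hx
  have hsum : Tendsto (fun N => ∑ n ∈ Finset.range N, f (((n : ℝ) + 1) * x)) atTop
      (𝓝 (latticeSum f x)) := (f.summable_nat_succ_mul hf0 x).hasSum.tendsto_sum_nat
  have hint : Tendsto (fun N : ℕ => ∫ t in 0..N * x, f t) atTop (𝓝 0) := by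
    simpa [hf] using intervalIntegral_tendsto_integral_Ioi 0 (f.integrable (μ := volume)).integrableOn hN
  have hderiv : ∀ N : ℕ, ∫ t in 0..N * x, |deriv f t| ≤ ∫ t in Ioi 0, |deriv f t| := by
    intro N
    rw [intervalIntegral.integral_of_le (by positivity)]
    exact setIntegral_mono_set f.integrable_deriv.abs.integrableOn
      (ae_of_all _ fun t => abs_nonneg _) Ioc_subset_Ioi_self.eventuallyLE
  have hlim : |x * latticeSum f x - 0| ≤ x * ∫ t in Ioi 0, |deriv f t| :=
    le_of_tendsto ((hsum.const_mul x).sub hint).abs <| Eventually.of_forall fun N =>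
      (abs_mul_sum_sub_intervalIntegral_le f.differentiable f.continuous_deriv hx.le N).trans
        (mul_le_mul_of_nonneg_left (hderiv N) hx.le)
  rwa [sub_zero, abs_mul, abs_of_pos hx, mul_le_mul_iff_right₀ hx] at hlim

end SchwartzMap

lemma integral_Ioi_zero_of_even {g : ℝ → ℝ} (hg : Integrable g) (heven : ∀ x, g (-x) = g x) :
    ∫ x in Ioi 0, g x = (∫ x, g x) / 2 := by
  have hIic : ∫ x in Iic 0, g x = ∫ x in Ioi 0, g x := by
    simpa [heven] using (integral_comp_neg_Ioi (0 : ℝ) g).symm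
  have := integral_add_compl (measurableSet_Iic (a := (0 : ℝ))) hg
  rw [compl_Iic, hIic] at this
  linarith

lemma measurable_latticeSum (f : SchwartzMap ℝ ℝ) (hf0 : f 0 = 0) : Measurable (latticeSum f) :=
  measurable_of_tendsto_metrizable
    (fun N => Finset.measurable_sum _ fun n _ => (f.continuous.comp (by fun_prop)).measurable)
    (tendsto_pi_nhds.2 fun x => (f.summable_nat_succ_mul hf0 x).hasSum.tendsto_sum_nat)

section MellinOfBounded

variable {g : ℝ → ℝ} {B : ℝ}

lemma isBigO_rpow_atTop_of_pow_mul_le (hdecay : ∀ k : ℕ, ∃ C, ∀ x, 1 ≤ x → x ^ k * |g x| ≤ C)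
    (a : ℝ) : (fun x => (g x : ℂ)) =O[atTop] (· ^ (-a)) := by
  obtain ⟨k, hk⟩ := exists_nat_ge a
  obtain ⟨C, hC⟩ := hdecay k
  refine isBigO_ofReal_left.2 <| IsBigO.of_bound C <| eventually_atTop.2 ⟨1, fun x hx => ?_⟩
  have hx0 : 0 < x := by linarith
  rw [Real.norm_eq_abs, Real.norm_of_nonneg (Real.rpow_nonneg hx0.le _)]
  calc |g x| ≤ C * x ^ (-(k : ℝ)) := by
        rw [Real.rpow_neg hx0.le, Real.rpow_natCast, ← div_eq_mul_inv,
          le_div_iff₀ (by positivity), mul_comm]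
        exact hC x hx
    _ ≤ C * x ^ (-a) := by
        have : 0 ≤ C := (mul_nonneg (by positivity) (abs_nonneg _)).trans (hC x hx)
        gcongr

lemma isBigO_rpow_nhdsGT_zero_of_bounded (hB : ∀ x, 0 < x → |g x| ≤ B) :
    (fun x => (g x : ℂ)) =O[𝓝[>] 0] (· ^ (-(0 : ℝ))) := by
  refine isBigO_ofReal_left.2 <| IsBigO.of_bound B <| eventually_nhdsWithin_of_forall fun x hx => ?_
  simpa using hB x hx

lemma locallyIntegrableOn_Ioi_of_bounded (hg : Measurable g) (hB : ∀ x, 0 < x → |g x| ≤ B) :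
    LocallyIntegrableOn (fun x => (g x : ℂ)) (Ioi 0) := by
  refine (locallyIntegrableOn_iff isOpen_Ioi.isLocallyClosed).2 fun K hK hKc =>
    Measure.integrableOn_of_bounded hKc.measure_lt_top.ne
      (Complex.measurable_ofReal.comp hg).aestronglyMeasurable (M := B) ?_
  filter_upwards [ae_restrict_mem hKc.measurableSet] with x hx
  simpa using hB x (hK hx)

variable (hg : Measurable g) (hB : ∀ x, 0 < x → |g x| ≤ B)
  (hdecay : ∀ k : ℕ, ∃ C, ∀ x, 1 ≤ x → x ^ k * |g x| ≤ C) {w : ℂ} (hw : 0 < w.re)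
include hg hB hdecay hw

lemma mellinConvergent_of_bounded_of_decay : MellinConvergent (fun x => (g x : ℂ)) w :=
  mellinConvergent_of_isBigO_rpow (locallyIntegrableOn_Ioi_of_bounded hg hB)
    (isBigO_rpow_atTop_of_pow_mul_le hdecay (w.re + 1)) (lt_add_one _)
    (isBigO_rpow_nhdsGT_zero_of_bounded hB) hw

lemma mellin_differentiableAt_of_bounded_of_decay :
    DifferentiableAt ℂ (mellin fun x => (g x : ℂ)) w :=
  mellin_differentiableAt_of_isBigO_rpow (locallyIntegrableOn_Ioi_of_bounded hg hB)
    (isBigO_rpow_atTop_of_pow_mul_le hdecay (w.re + 1)) (lt_add_one _)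
    (isBigO_rpow_nhdsGT_zero_of_bounded hB) hw

end MellinOfBounded

namespace SchwartzMap

variable (f : SchwartzMap ℝ ℝ)

lemma pow_mul_abs_le (k : ℕ) {x : ℝ} (hx : 0 ≤ x) :
    x ^ k * |f x| ≤ SchwartzMap.seminorm ℝ k 0 f := by
  simpa [abs_of_nonneg hx] using f.norm_pow_mul_le_seminorm ℝ k x

lemma mellinConvergent {w : ℂ} (hw : 0 < w.re) : MellinConvergent (fun x => (f x : ℂ)) w :=
  mellinConvergent_of_bounded_of_decay f.continuous.measurable
    (fun x _ => f.norm_le_seminorm ℝ x) (fun k => ⟨_, fun x hx => f.pow_mul_abs_le k (by linarith)⟩) hw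

lemma mellin_differentiableAt {w : ℂ} (hw : 0 < w.re) :
    DifferentiableAt ℂ (mellin fun x => (f x : ℂ)) w :=
  mellin_differentiableAt_of_bounded_of_decay f.continuous.measurable
    (fun x _ => f.norm_le_seminorm ℝ x) (fun k => ⟨_, fun x hx => f.pow_mul_abs_le k (by linarith)⟩) hw

section Vanishing

variable {f} (hf0 : f 0 = 0) (hf : ∫ t in Ioi 0, f t = 0) {w : ℂ} (hw : 0 < w.re)
include hf0 hf hw

lemma mellinConvergent_latticeSum : MellinConvergent (fun x => (latticeSum f x : ℂ)) w :=
  mellinConvergent_of_bounded_of_decay (measurable_latticeSum f hf0)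
    (fun _ hx => f.abs_latticeSum_le hf0 hf hx) (f.pow_mul_abs_latticeSum_le hf0) hw

lemma mellin_latticeSum_differentiableAt :
    DifferentiableAt ℂ (mellin fun x => (latticeSum f x : ℂ)) w :=
  mellin_differentiableAt_of_bounded_of_decay (measurable_latticeSum f hf0)
    (fun _ hx => f.abs_latticeSum_le hf0 hf hx) (f.pow_mul_abs_latticeSum_le hf0) hw

end Vanishing

end SchwartzMap

lemma integral_norm_cpow_smul_comp_mul_left (φ : ℝ → ℂ) (w : ℂ) {a : ℝ} (ha : 0 < a) :
    ∫ t : ℝ in Ioi 0, ‖(t : ℂ) ^ (w - 1) • φ (a * t)‖ =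
      a ^ (-w.re) * ∫ t : ℝ in Ioi 0, ‖(t : ℂ) ^ (w - 1) • φ t‖ := by
  have hpt : ∀ t ∈ Ioi (0 : ℝ), ‖(t : ℂ) ^ (w - 1) • φ (a * t)‖ =
      a ^ (1 - w.re) * ‖((a * t : ℝ) : ℂ) ^ (w - 1) • φ (a * t)‖ := by
    intro t ht
    have ht : (0 : ℝ) < t := ht
    simp only [norm_smul, Complex.norm_cpow_eq_rpow_re_of_pos ht,
      Complex.norm_cpow_eq_rpow_re_of_pos (mul_pos ha ht), Complex.sub_re, Complex.one_re,
      Real.mul_rpow ha.le ht.le, ← mul_assoc, ← Real.rpow_add ha]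
    ring_nf; simp
  rw [setIntegral_congr_fun measurableSet_Ioi hpt, integral_const_mul,
    integral_comp_mul_left_Ioi (fun y => ‖(y : ℂ) ^ (w - 1) • φ y‖) 0 ha, mul_zero, smul_eq_mul,
    ← mul_assoc, ← Real.rpow_neg_one, ← Real.rpow_add ha]
  ring_nf

lemma mellin_latticeSum_eq_riemannZeta_mul (f : SchwartzMap ℝ ℝ) {w : ℂ} (hw : 1 < w.re) :
    mellin (fun x => (latticeSum f x : ℂ)) w = riemannZeta w * mellin (fun x => (f x : ℂ)) w := by
  set F : ℕ → ℝ → ℂ := fun n t => (t : ℂ) ^ (w - 1) • (f (((n : ℝ) + 1) * t) : ℂ)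
  have hconv := f.mellinConvergent (w := w) (by linarith)
  have hF_int : ∀ n : ℕ, IntegrableOn (F n) (Ioi 0) := fun n =>
    (MellinConvergent.comp_mul_left (by positivity)).2 hconv
  have hF_norm : Summable fun n : ℕ => ∫ t in Ioi 0, ‖F n t‖ := by
    simp only [F, integral_norm_cpow_smul_comp_mul_left (fun t => (f t : ℂ)) w
      (show (0 : ℝ) < _ + 1 from Nat.cast_add_one_pos _)]
    refine Summable.mul_right _ ?_
    exact_mod_cast (summable_nat_add_iff 1).2 (Real.summable_nat_rpow.2 (by linarith))
  have hF_tsum : ∀ t, ∑' n, F n t = (t : ℂ) ^ (w - 1) • (latticeSum f t : ℂ) := fun t => by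
    simp only [F, latticeSum, Complex.ofReal_tsum, smul_eq_mul, tsum_mul_left]
  have hF_integral : ∀ n : ℕ, ∫ t in Ioi 0, F n t =
      1 / ((n : ℂ) + 1) ^ w * mellin (fun x => (f x : ℂ)) w := fun n => by
    have := mellin_comp_mul_left (fun t => (f t : ℂ)) w (Nat.cast_add_one_pos n)
    rw [mellin] at this
    rw [this, smul_eq_mul, one_div, ← Complex.cpow_neg]
    norm_cast
  rw [mellin, zeta_eq_tsum_one_div_nat_add_one_cpow hw, ← tsum_mul_right]
  simp_rw [← hF_tsum, ← hF_integral]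
  exact (integral_tsum_of_summable_integral_norm hF_int hF_norm).symm

/-- Continued from `re w > 1` through the quarter plane `{re w > 0, im w > 0}`, which is convex and
avoids the pole of `ζ`. -/
lemma mellin_latticeSum_eq_riemannZeta_mul_of_im_pos {f : SchwartzMap ℝ ℝ} (hf0 : f 0 = 0)
    (hf : ∫ t in Ioi 0, f t = 0) {w : ℂ} (hre : 0 < w.re) (him : 0 < w.im) :
    mellin (fun x => (latticeSum f x : ℂ)) w = riemannZeta w * mellin (fun x => (f x : ℂ)) w := by
  set U : Set ℂ := {z | 0 < z.re} ∩ {z | 0 < z.im}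
  have hU : IsOpen U :=
    (isOpen_lt continuous_const Complex.continuous_re).inter
      (isOpen_lt continuous_const Complex.continuous_im)
  have hLHS : AnalyticOnNhd ℂ (mellin fun x => (latticeSum f x : ℂ)) U :=
    DifferentiableOn.analyticOnNhd (fun z hz =>
      (f.mellin_latticeSum_differentiableAt hf0 hf hz.1).differentiableWithinAt) hU
  have hRHS : AnalyticOnNhd ℂ (fun z => riemannZeta z * mellin (fun x => (f x : ℂ)) z) U := by
    refine DifferentiableOn.analyticOnNhd (fun z hz => ?_) hU
    have hz1 : z ≠ 1 := fun h => by simpa [h] using hz.2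
    exact ((differentiableAt_riemannZeta hz1).mul
      (f.mellin_differentiableAt hz.1)).differentiableWithinAt
  have hnhds : {z : ℂ | 1 < z.re} ∈ 𝓝 (2 + Complex.I) :=
    (isOpen_lt continuous_const Complex.continuous_re).mem_nhds (by simp)
  refine hLHS.eqOn_of_preconnected_of_eventuallyEq hRHS
    ((convex_halfSpace_re_gt 0).inter (convex_halfSpace_im_gt 0)).isPreconnected
    (z₀ := 2 + Complex.I) (by simp [U]) ?_ ⟨hre, him⟩
  filter_upwards [hnhds] with z hz using mellin_latticeSum_eq_riemannZeta_mul f hz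

section Unfolding

variable {E : Type*} [NormedAddCommGroup E] [NormedSpace ℝ E] {μ : ℝ}

lemma iUnion_Ioc_zpow (hμ : 1 < μ) : ⋃ k : ℤ, Ioc (μ ^ k) (μ ^ (k + 1)) = Ioi 0 := by
  ext x
  simp only [mem_iUnion, mem_Ioi]
  exact ⟨fun ⟨k, hk⟩ => (zpow_pos (by linarith) k).trans hk.1,
    fun hx => exists_mem_Ioc_zpow hx hμ⟩

lemma pairwise_disjoint_Ioc_zpow (hμ : 1 < μ) :
    Pairwise (Function.onFun Disjoint fun k : ℤ => Ioc (μ ^ k) (μ ^ (k + 1))) := by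
  simpa using (zpow_right_mono₀ hμ.le).pairwise_disjoint_on_Ioc_succ

lemma integral_Ioc_one_zpow_smul_comp_mul (ψ : ℝ → E) (hμ : 1 < μ) (k : ℤ) :
    ∫ u in Ioc 1 μ, μ ^ k • ψ (μ ^ k * u) = ∫ v in Ioc (μ ^ k) (μ ^ (k + 1)), ψ v := by
  have hμk : 0 < μ ^ k := zpow_pos (by linarith) k
  rw [← intervalIntegral.integral_of_le hμ.le,
    ← intervalIntegral.integral_of_le (zpow_le_zpow_right₀ hμ.le (by omega)),
    intervalIntegral.integral_smul, intervalIntegral.integral_comp_mul_left _ hμk.ne', mul_one,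
    ← zpow_add_one₀ (show μ ≠ 0 by linarith), smul_smul, mul_inv_cancel₀ hμk.ne', one_smul]

lemma integrableOn_Ioc_one_zpow_smul_comp_mul {ψ : ℝ → E} (hψ : IntegrableOn ψ (Ioi 0))
    (hμ : 1 < μ) (k : ℤ) : IntegrableOn (fun u => μ ^ k • ψ (μ ^ k * u)) (Ioc 1 μ) := by
  have hμk : 0 < μ ^ k := zpow_pos (by linarith) k
  have hpiece : IntervalIntegrable ψ volume (μ ^ k) (μ ^ (k + 1)) :=
    (intervalIntegrable_iff_integrableOn_Ioc_of_le (zpow_le_zpow_right₀ hμ.le (by omega))).2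
      (hψ.mono_set fun x hx => hμk.trans hx.1)
  have := hpiece.comp_mul_left (c := μ ^ k)
  rw [div_self hμk.ne', zpow_add_one₀ (by linarith), mul_div_cancel_left₀ _ hμk.ne'] at this
  exact ((intervalIntegrable_iff_integrableOn_Ioc_of_le hμ.le).1 this).smul (μ ^ k)

/-- Unfolding: the sets `μ^k · (1, μ]` tile `(0, ∞)`. -/
lemma integral_Ioc_one_tsum_zpow_smul_comp_mul {ψ : ℝ → E} (hψ : IntegrableOn ψ (Ioi 0))
    (hμ : 1 < μ) :
    ∫ u in Ioc 1 μ, ∑' k : ℤ, μ ^ k • ψ (μ ^ k * u) = ∫ v in Ioi 0, ψ v := by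
  have hψ' : IntegrableOn ψ (⋃ k : ℤ, Ioc (μ ^ k) (μ ^ (k + 1))) := by
    rwa [iUnion_Ioc_zpow hμ]
  have hpieces := hasSum_integral_iUnion (fun _ => measurableSet_Ioc)
    (pairwise_disjoint_Ioc_zpow hμ) hψ'
  have hnorms : Summable fun k : ℤ => ∫ u in Ioc 1 μ, ‖μ ^ k • ψ (μ ^ k * u)‖ := by
    refine (hasSum_integral_iUnion (fun _ => measurableSet_Ioc)
      (pairwise_disjoint_Ioc_zpow hμ) hψ'.norm).summable.congr fun k => ?_
    rw [← integral_Ioc_one_zpow_smul_comp_mul (fun v => ‖ψ v‖) hμ]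
    simp only [norm_smul, Real.norm_of_nonneg (zpow_pos (zero_lt_one.trans hμ) k).le, smul_eq_mul]
  rw [← integral_tsum_of_summable_integral_norm
      (integrableOn_Ioc_one_zpow_smul_comp_mul hψ hμ) hnorms,
    ← iUnion_Ioc_zpow hμ, ← hpieces.tsum_eq]
  exact tsum_congr (integral_Ioc_one_zpow_smul_comp_mul ψ hμ)

end Unfolding

lemma ofReal_zpow_cpow_eq_one {μ : ℝ} (hμ : 0 < μ) {c : ℂ} (h : (μ : ℂ) ^ c = 1) (k : ℤ) :
    ((μ ^ k : ℝ) : ℂ) ^ c = 1 := by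
  have hμk : 0 < μ ^ k := zpow_pos hμ k
  rw [Complex.cpow_def_of_ne_zero (Complex.ofReal_ne_zero.2 hμk.ne'),
    ← Complex.ofReal_log hμk.le, Real.log_zpow, Complex.ofReal_mul, Complex.ofReal_intCast,
    mul_assoc, Complex.exp_int_mul, Complex.ofReal_log hμ.le,
    ← Complex.cpow_def_of_ne_zero (Complex.ofReal_ne_zero.2 hμ.ne'), h, one_zpow]

/-- Since `u ↦ u^{is}` is `μ`-periodic, the integrand of `∫_C χ · Σ_μ E(f) d*u` is the
`μ`-periodisation of the Mellin integrand `v^{w-1} latticeSum f v` at `w = 1/2 + is`. -/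
lemma cpow_mul_SigmaE_div_eq_tsum (f : SchwartzMap ℝ ℝ) {μ s u : ℝ} (hμ : 0 < μ)
    (hμs : (μ : ℂ) ^ (Complex.I * s) = 1) (hu : 0 < u) :
    (u : ℂ) ^ (Complex.I * s) * (SigmaE μ f u : ℂ) / u =
      ∑' k : ℤ, μ ^ k • (((μ ^ k * u : ℝ) : ℂ) ^ (1 / 2 + Complex.I * s - 1) •
        (latticeSum f (μ ^ k * u) : ℂ)) := by
  rw [SigmaE, Complex.ofReal_tsum, ← tsum_mul_left, ← tsum_div_const]
  refine tsum_congr fun k => ?_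
  set v := μ ^ k * u
  have hμk : 0 < μ ^ k := zpow_pos hμ k
  have hv : 0 < v := mul_pos hμk hu
  have hreal : μ ^ k * v ^ (-(1 / 2) : ℝ) = Real.sqrt v / u := by
    rw [Real.rpow_neg hv.le, ← Real.sqrt_eq_rpow, eq_div_iff hu.ne']
    field_simp
    rw [Real.sq_sqrt hv.le]
  have hcpow : (v : ℂ) ^ (1 / 2 + Complex.I * s - 1) =
      (u : ℂ) ^ (Complex.I * s) * ((v ^ (-(1 / 2) : ℝ) : ℝ) : ℂ) := by
    rw [show 1 / 2 + Complex.I * s - 1 = Complex.I * s + ((-(1 / 2) : ℝ) : ℂ) by push_cast; ring,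
      Complex.cpow_add _ _ (Complex.ofReal_ne_zero.2 hv.ne'), Complex.ofReal_cpow hv.le,
      Complex.ofReal_mul, Complex.mul_cpow_ofReal_nonneg hμk.le hu.le,
      ofReal_zpow_cpow_eq_one hμ hμs, one_mul]
  change (u : ℂ) ^ (Complex.I * s) * ((Real.sqrt v * latticeSum f v : ℝ) : ℂ) / u = _
  rw [hcpow, Complex.real_smul, smul_eq_mul]
  calc _ = (u : ℂ) ^ (Complex.I * s) * ((Real.sqrt v / u * latticeSum f v : ℝ) : ℂ) := by
        push_cast; ring
    _ = _ := by rw [← hreal]; push_cast; ring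

lemma integral_cpow_mul_SigmaE_div_eq_mellin {f : SchwartzMap ℝ ℝ} (hf0 : f 0 = 0)
    (hf : ∫ t in Ioi 0, f t = 0) {μ s : ℝ} (hμ : 1 < μ) (hμs : (μ : ℂ) ^ (Complex.I * s) = 1) :
    ∫ u in Ioc 1 μ, (u : ℂ) ^ (Complex.I * s) * (SigmaE μ f u : ℂ) / u =
      mellin (fun x => (latticeSum f x : ℂ)) (1 / 2 + Complex.I * s) := by
  rw [setIntegral_congr_fun measurableSet_Ioc fun u hu =>
    cpow_mul_SigmaE_div_eq_tsum f (by linarith) hμs (by linarith [hu.1])]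
  exact integral_Ioc_one_tsum_zpow_smul_comp_mul
    (f.mellinConvergent_latticeSum hf0 hf (by simp)) hμ

section ZetaCycle

variable {μ : ℝ}

lemma integral_mulHaarOn (F : ℝ → ℂ) : ∫ u, F u ∂mulHaarOn μ = ∫ u in Ioc 1 μ, F u / u := by
  rw [mulHaarOn, integral_withDensity_eq_integral_toReal_smul (by fun_prop)
    (ae_of_all _ fun _ => ENNReal.ofReal_lt_top)]
  refine setIntegral_congr_fun measurableSet_Ioc fun u hu => ?_
  rw [ENNReal.toReal_ofReal (inv_nonneg.2 (by linarith [hu.1])), Complex.real_smul,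
    Complex.ofReal_inv, div_eq_inv_mul]

lemma ae_mulHaarOn_mem_Ioc : ∀ᵐ u ∂mulHaarOn μ, u ∈ Ioc 1 μ :=
  (withDensity_absolutelyContinuous _ _).ae_le (ae_restrict_mem measurableSet_Ioc)

instance : IsFiniteMeasure (mulHaarOn μ) := by
  refine isFiniteMeasure_withDensity_ofReal (Integrable.hasFiniteIntegral ?_)
  refine Measure.integrableOn_of_bounded measure_Ioc_lt_top.ne (by fun_prop) (M := 1) ?_
  filter_upwards [ae_restrict_mem measurableSet_Ioc] with u hu
  rw [Real.norm_of_nonneg (inv_nonneg.2 (by linarith [hu.1]))]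
  exact inv_le_one_of_one_le₀ hu.1.le

lemma mulHaarOn_ne_zero (hμ : 1 < μ) : mulHaarOn μ ≠ 0 := by
  rw [Ne, mulHaarOn, withDensity_eq_zero_iff (by fun_prop), EventuallyEq,
    ae_restrict_iff' measurableSet_Ioc]
  intro h
  have hnull : volume (Ioc 1 μ) = 0 := by
    rw [measure_eq_zero_iff_ae_notMem]
    filter_upwards [h] with u hu hmem
    exact (ENNReal.ofReal_pos.2 (inv_pos.2 (by linarith [hmem.1]))).ne' (hu hmem)
  simp only [Real.volume_Ioc, ENNReal.ofReal_eq_zero] at hnull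
  linarith

/-- `u ↦ u^{-is}`, a unit vector of `L²(C)`, is orthogonal to `Σ_μ E(f)` exactly when
`∫_C u^{is} Σ_μ E(f)(u) d*u = 0`. -/
lemma isZetaCycle_of_integral_eq_zero (hμ : 1 < μ) {s : ℝ}
    (h : ∀ f ∈ S0ev, ∫ u in Ioc 1 μ, (u : ℂ) ^ (Complex.I * s) * (SigmaE μ f u : ℂ) / u = 0) :
    IsZetaCycle μ := by
  set χ : ℝ → ℂ := fun u => starRingEnd ℂ ((u : ℂ) ^ (Complex.I * s))
  have hχ : ∀ᵐ u ∂mulHaarOn μ, ‖χ u‖ = 1 := by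
    filter_upwards [ae_mulHaarOn_mem_Ioc] with u hu
    simp [χ, Complex.norm_cpow_eq_rpow_re_of_pos (zero_lt_one.trans hu.1)]
  have hmem : MemLp χ 2 (mulHaarOn μ) :=
    .of_bound (Complex.continuous_conj.measurable.comp
      (Complex.measurable_ofReal.pow_const _)).aestronglyMeasurable 1 (hχ.mono fun _ hu => hu.le)
  refine ⟨hmem.toLp χ, fun h0 => mulHaarOn_ne_zero hμ ?_, fun f hf => ?_⟩
  · rw [← ae_eq_bot, ← Filter.eventually_false_iff_eq_bot]
    filter_upwards [hχ, hmem.coeFn_toLp, Lp.eq_zero_iff_ae_eq_zero.1 h0] with u h1 h2 h3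
    simp [← h2, h3] at h1
  · rw [← h f hf, ← integral_mulHaarOn]
    refine integral_congr_ae ?_
    filter_upwards [hmem.coeFn_toLp] with u hu
    simp [hu, χ]

end ZetaCycle

lemma ofReal_exp_two_pi_mul_div_cpow_eq_one {s : ℝ} (hs : s ≠ 0) (n : ℤ) :
    ((Real.exp (2 * Real.pi * n / s) : ℝ) : ℂ) ^ (Complex.I * s) = 1 := by
  rw [Complex.cpow_def_of_ne_zero (Complex.ofReal_ne_zero.2 (Real.exp_pos _).ne'),
    ← Complex.ofReal_log (Real.exp_pos _).le, Real.log_exp,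
    show ((2 * Real.pi * n / s : ℝ) : ℂ) * (Complex.I * s) = n * (2 * Real.pi * Complex.I) by
      have : (s : ℂ) ≠ 0 := Complex.ofReal_ne_zero.2 hs
      push_cast; field_simp]
  exact Complex.exp_int_mul_two_pi_mul_I n

/-- if `ζ(1/2+is) = 0` with `s > 0` and `L = 2πn/s`, `μ = e^L`, then
`u ↦ u^{is}` is well defined on `C = ℝ₊*/μ^ℤ` (i.e. `μ^{is} = 1`), it is orthogonal to every
`Σ_μ E(f)` for `f ∈ S₀^ev`, and in particular `C` is a ζ-cycle. -/
theorem stmt7 (s : ℝ) (hs : 0 < s) (hzero : riemannZeta (1 / 2 + Complex.I * s) = 0)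
    (n : ℕ) (hn : 0 < n) (L μ : ℝ) (hL : L = 2 * Real.pi * n / s) (hμ : μ = Real.exp L) :
    ((μ : ℂ) ^ (Complex.I * (s : ℂ)) = 1) ∧
    (∀ f ∈ S0ev,
      (∫ u in Set.Ioc (1:ℝ) μ,
        (u : ℂ) ^ (Complex.I * (s : ℂ)) * (SigmaE μ f u : ℂ) / (u : ℂ)) = 0) ∧
    IsZetaCycle μ := by
  have hμ1 : 1 < μ := by
    have : (0 : ℝ) < n := by exact_mod_cast hn
    rw [hμ, hL, Real.one_lt_exp_iff]
    positivity
  have hχ : (μ : ℂ) ^ (Complex.I * (s : ℂ)) = 1 := by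
    rw [hμ, hL]
    exact_mod_cast ofReal_exp_two_pi_mul_div_cpow_eq_one hs.ne' n
  have horth : ∀ f ∈ S0ev, ∫ u in Ioc 1 μ,
      (u : ℂ) ^ (Complex.I * (s : ℂ)) * (SigmaE μ f u : ℂ) / (u : ℂ) = 0 := by
    rintro f ⟨heven, hf0, hint⟩
    have hf : ∫ t in Ioi 0, f t = 0 := by
      rw [integral_Ioi_zero_of_even f.integrable heven, hint, zero_div]
    rw [integral_cpow_mul_SigmaE_div_eq_mellin hf0 hf hμ1 hχ,
      mellin_latticeSum_eq_riemannZeta_mul_of_im_pos hf0 hf (by simp) (by simpa using hs),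
      hzero, zero_mul]
  exact ⟨hχ, horth, isZetaCycle_of_integral_eq_zero hμ1 horth⟩
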